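/- arXiv:0910.1897 — 3 statements merged into one kernel-verified Lean document; each statement's English description precedes it below -/
import Mathlib

section
/- Every topological space X that is first countable, Lindelöf and Hausdorff is squat: every continuous map f : 𝕃₊ → X is eventually constant. -/
noncomputable section

open Set Topology Filter

universe u

/-! ### The long ray and the long line -/

/-- The first uncountable ordinal `ω₁`, viewed as the linearly ordered set of all
countable ordinals. -/
def Omega1 : Type 1 := {o : Ordinal.{0} // o < (Cardinal.aleph 1).ord}

instance : LinearOrder Omega1 :=
  inferInstanceAs (LinearOrder {o : Ordinal.{0} // o < (Cardinal.aleph 1).ord})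

/-- `ω₁` carries the order topology. -/
instance : TopologicalSpace Omega1 := Preorder.topology Omega1

instance : OrderTopology Omega1 := ⟨rfl⟩

/-- The underlying countable ordinal of an element of `ω₁`. -/
def Omega1.toOrdinal : Omega1 → Ordinal.{0} := Subtype.val

/-- The closed long ray `𝕃≥0`: the set `ω₁ × [0,1)` with the lexicographic order and the
order topology. -/
def ClosedLongRay : Type 1 := Omega1 ×ₗ (Set.Ico (0:ℝ) 1)

instance : LinearOrder ClosedLongRay :=
  inferInstanceAs (LinearOrder (Omega1 ×ₗ (Set.Ico (0:ℝ) 1)))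

instance : TopologicalSpace ClosedLongRay := Preorder.topology ClosedLongRay

instance : OrderTopology ClosedLongRay := ⟨rfl⟩

/-- The long ray `𝕃₊`: the closed long ray with its least element removed, with the
subspace topology (an element is non-minimal iff something is below it). -/
def LongRay : Type 1 := {x : ClosedLongRay // ∃ y, y < x}

instance : LinearOrder LongRay :=
  inferInstanceAs (LinearOrder {x : ClosedLongRay // ∃ y, y < x})

instance : TopologicalSpace LongRay :=
  inferInstanceAs (TopologicalSpace {x : ClosedLongRay // ∃ y, y < x})

/-- The inclusion of the long ray into the closed long ray. -/
def LongRay.toCLR : LongRay → ClosedLongRay := Subtype.val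

/-- The long line `𝕃`: an order-reversed copy of `𝕃₊` placed below the closed long ray
`𝕃≥0`, with the order topology. -/
def LongLine : Type 1 := (OrderDual LongRay) ⊕ₗ ClosedLongRay

instance : LinearOrder LongLine :=
  inferInstanceAs (LinearOrder ((OrderDual LongRay) ⊕ₗ ClosedLongRay))

instance : TopologicalSpace LongLine := Preorder.topology LongLine

instance : OrderTopology LongLine := ⟨rfl⟩

/-- The identification of `𝕃₊` with the set of positive elements of `𝕃`. -/
def LongRay.inL (a : LongRay) : LongLine := toLex (Sum.inr a.toCLR)

/-- The natural order-reversing involution `x ↦ -x` of the long line, exchanging the two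
copies of `𝕃₊` and fixing the least element `0` of `𝕃≥0`. -/
noncomputable def LongLine.neg (x : LongLine) : LongLine :=
  match ofLex x with
  | Sum.inl a => toLex (Sum.inr (OrderDual.ofDual a).toCLR)
  | Sum.inr b =>
      @dite _ (∃ y, y < b) (Classical.dec _)
        (fun h => toLex (Sum.inl (OrderDual.toDual (⟨b, h⟩ : LongRay))))
        (fun _ => x)

/-- A subset of the long ray is a *club* if it is closed (in the topology of `𝕃₊`) and
unbounded (i.e. cofinal). -/
def ClubInLongRay (C : Set LongRay) : Prop :=
  IsClosed C ∧ ∀ β : LongRay, ∃ α ∈ C, β ≤ α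

/-- A topological space `X` is *squat* if every continuous map `𝕃₊ → X` is eventually
constant. -/
def Squat (X : Type*) [TopologicalSpace X] : Prop :=
  ∀ f : LongRay → X, Continuous f → ∃ (β : LongRay) (x : X), ∀ α, β ≤ α → f α = x

/-! ### Manifolds and foliations -/

/-- A (topological) `n`-manifold: a nonempty Hausdorff space in which every point has an
open neighbourhood homeomorphic to `ℝⁿ`. -/
def IsTopManifold (M : Type u) [TopologicalSpace M] (n : ℕ) : Prop :=
  Nonempty M ∧ T2Space M ∧
    ∀ x : M, ∃ U : Set M, x ∈ U ∧ IsOpen U ∧ Nonempty (U ≃ₜ (Fin n → ℝ))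

/-- A foliation of dimension `p` and codimension `q` on a space `M`: a family of charts
`φᵢ : Uᵢ ≃ₜ ℝᵖ × ℝ^q` on open sets covering `M` such that all coordinate transformations
have the form `(x, y) ↦ (g (x, y), h y)`, i.e. the last `q` coordinates of the image
depend only on the last `q` coordinates of the argument. -/
structure Foliation (M : Type u) [TopologicalSpace M] (p q : ℕ) where
  /-- index type of the atlas -/
  ι : Type u
  /-- chart domains -/
  U : ι → Set M
  /-- the charts -/
  chart : (i : ι) → ((U i) ≃ₜ ((Fin p → ℝ) × (Fin q → ℝ)))
  isOpen : ∀ i, IsOpen (U i)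
  covers : ∀ x : M, ∃ i, x ∈ U i
  compat : ∀ i j (x y : M) (hxi : x ∈ U i) (hxj : x ∈ U j) (hyi : y ∈ U i) (hyj : y ∈ U j),
    (chart i ⟨x, hxi⟩).2 = (chart i ⟨y, hyi⟩).2 → (chart j ⟨x, hxj⟩).2 = (chart j ⟨y, hyj⟩).2

namespace Foliation

variable {M : Type u} [TopologicalSpace M] {p q : ℕ}

/-- The set `φᵢ⁻¹ (ℝᵖ × {y})` in the chart domain `Uᵢ`. -/
def plaqueFibre (F : Foliation M p q) (i : F.ι) (y : Fin q → ℝ) : Set M :=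
  {w : M | ∃ hw : w ∈ F.U i, (F.chart i ⟨w, hw⟩).2 = y}

/-- A *plaque* of the foliation: a connected component of a set of the form
`φᵢ⁻¹ (ℝᵖ × {y})`. -/
def IsPlaque (F : Foliation M p q) (P : Set M) : Prop :=
  ∃ (i : F.ι) (y : Fin q → ℝ) (z : M), z ∈ F.plaqueFibre i y ∧
    P = connectedComponentIn (F.plaqueFibre i y) z

/-- Two points lie in a common plaque. -/
def samePlaque (F : Foliation M p q) (x y : M) : Prop :=
  ∃ P, F.IsPlaque P ∧ x ∈ P ∧ y ∈ P

/-- The leaf relation: the smallest equivalence relation relating any two points that lie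
in a common plaque. -/
def leafRel (F : Foliation M p q) : M → M → Prop := Relation.EqvGen F.samePlaque

/-- The *leaves* of the foliation: equivalence classes of the leaf relation. -/
def IsLeaf (F : Foliation M p q) (L : Set M) : Prop :=
  ∃ x : M, L = {y | F.leafRel x y}

/-- The *leaf topology* on a leaf (or any subset) `L`: the topology generated by the
plaques contained in `L`. -/
def leafTopology (F : Foliation M p q) (L : Set M) : TopologicalSpace L :=
  TopologicalSpace.generateFrom
    {s : Set L | ∃ P, F.IsPlaque P ∧ P ⊆ L ∧ s = Subtype.val ⁻¹' P}

/-- A leaf is *long* if it is not metrisable in its leaf topology. -/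
def IsLongLeaf (F : Foliation M p q) (L : Set M) : Prop :=
  F.IsLeaf L ∧ ¬ @TopologicalSpace.MetrizableSpace L (F.leafTopology L)

/-- A subset of `M` is *saturated* by the foliation if it is a union of leaves. -/
def Saturated (F : Foliation M p q) (S : Set M) : Prop :=
  ∀ x ∈ S, ∀ y, F.leafRel x y → y ∈ S

end Foliation

/-!
Countable subsets of `𝕃₊` are bounded above (`ω₁` is regular) and countable subsets of `𝕃≥0`
have least upper bounds, so monotone sequences in `𝕃₊` converge. Hence `atTop` on `𝕃₊` has the
countable intersection property, and two clubs meet (take the limit of a monotone sequence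
alternating between them). Since `X` is Lindelöf, `f` has a cluster value `x` at infinity; by
first countability `f⁻¹ {x}` is a club. For an open `U ∋ x` the closed set `f⁻¹ Uᶜ` misses
that club, hence is bounded, so `f → x`. Finally, a countable neighbourhood basis at `x` and
the countable intersection property of `atTop` upgrade `f → x` to `f = x` eventually.
-/

open Cardinal

theorem BddAbove.exists_isLUB_of_wellFoundedLT {α : Type*} [LinearOrder α] [WellFoundedLT α]
    {s : Set α} (hs : BddAbove s) : ∃ a, IsLUB s a :=
  ⟨wellFounded_lt.min _ hs, wellFounded_lt.min_mem _ hs, fun _ hb => wellFounded_lt.min_le hb⟩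

theorem exists_monotone_forall_of_frequently_atTop {α : Type*} [Preorder α] [IsDirectedOrder α]
    [Nonempty α] {P : ℕ → α → Prop} (h : ∀ n, ∃ᶠ a in atTop, P n a) :
    ∃ e : ℕ → α, Monotone e ∧ ∀ n, P n (e n) := by
  choose g hg hP using fun n a => frequently_atTop.1 (h n) a
  let e : ℕ → α := fun n => Nat.rec (g 0 (Classical.arbitrary α)) (fun n a => g (n + 1) a) n
  refine ⟨e, monotone_nat_of_le_succ fun n => hg _ _, fun n => ?_⟩
  cases n <;> exact hP _ _

theorem countableInterFilter_atTop_of_bddAbove {α : Type*} [Preorder α] [IsDirectedOrder α]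
    [Nonempty α] (h : ∀ s : Set α, s.Countable → BddAbove s) :
    CountableInterFilter (atTop : Filter α) := by
  refine ⟨fun S hS hSmem => ?_⟩
  choose a ha using fun t (ht : t ∈ S) => mem_atTop_sets.1 (hSmem t ht)
  have : Countable S := hS.to_subtype
  obtain ⟨m, hm⟩ := h (range fun t : S => a t t.2) (countable_range _)
  exact mem_atTop_sets.2 ⟨m, fun b hb t ht => ha t ht b ((hm ⟨⟨t, ht⟩, rfl⟩).trans hb)⟩

theorem Filter.Tendsto.eventually_eq_of_countableInterFilter {α X : Type*} [TopologicalSpace X]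
    [T1Space X] [FirstCountableTopology X] {l : Filter α} [CountableInterFilter l] {f : α → X}
    {x : X} (h : Tendsto f l (𝓝 x)) : ∀ᶠ a in l, f a = x := by
  obtain ⟨U, hU⟩ := (𝓝 x).exists_antitone_basis
  filter_upwards [eventually_countable_forall.2 fun n => h (hU.mem n)] with a ha
  have hx : f a ∈ ⋂ (n) (_ : True), U n := mem_iInter₂.2 fun n _ => ha n
  rwa [biInter_basis_nhds hU.toHasBasis] at hx

namespace Prod.Lex

variable {α β : Type*} [LinearOrder α] [LinearOrder β] {S : Set (α ×ₗ β)} {a : α}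

theorem fst_mem_upperBounds_image {u : α ×ₗ β} (hu : u ∈ upperBounds S) :
    (ofLex u).1 ∈ upperBounds ((fun p => (ofLex p).1) '' S) :=
  forall_mem_image.2 fun _ hp => monotone_fst _ _ (hu hp)

theorem snd_mem_upperBounds_fiber {u : α ×ₗ β} (hu : u ∈ upperBounds S) :
    (ofLex u).2 ∈ upperBounds {b | toLex ((ofLex u).1, b) ∈ S} := fun c hc => by
  have := hu hc
  rw [← toLex_ofLex u, toLex_le_toLex] at this
  exact (this.resolve_left (lt_irrefl _)).2

theorem isLUB_toLex_bot_of_notMem [OrderBot β] (ha : IsLUB ((fun p => (ofLex p).1) '' S) a)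
    (haS : a ∉ (fun p => (ofLex p).1) '' S) : IsLUB S (toLex (a, ⊥)) := by
  refine ⟨fun p hp => le_of_lt (lt_iff.2 (Or.inl ?_)), fun u hu => ?_⟩
  · exact (ha.1 (mem_image_of_mem _ hp)).lt_of_ne fun h => haS ⟨p, hp, h⟩
  · exact le_iff.2 ((ha.2 (fst_mem_upperBounds_image hu)).lt_or_eq.imp_right
      fun h => ⟨h, bot_le⟩)

theorem isLUB_toLex_of_isGreatest {b : β} (ha : IsGreatest ((fun p => (ofLex p).1) '' S) a)
    (hb : IsLUB {b | toLex (a, b) ∈ S} b) : IsLUB S (toLex (a, b)) := by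
  refine ⟨fun p hp => ?_, fun u hu => ?_⟩
  · rcases (ha.2 (mem_image_of_mem _ hp)).lt_or_eq with h | rfl
    · exact le_iff.2 (Or.inl h)
    · exact le_iff.2 (Or.inr ⟨rfl, hb.1 hp⟩)
  · refine le_iff.2 ((ha.isLUB.2 (fst_mem_upperBounds_image hu)).lt_or_eq.imp_right
      fun (h : a = _) => ⟨h, hb.2 ?_⟩)
    exact h ▸ snd_mem_upperBounds_fiber hu

theorem isLUB_toLex_bot_of_covBy [OrderBot β] {a' : α}
    (ha : IsGreatest ((fun p => (ofLex p).1) '' S) a) (hT : ¬BddAbove {b | toLex (a, b) ∈ S})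
    (haa' : a ⋖ a') : IsLUB S (toLex (a', ⊥)) := by
  refine ⟨fun p hp => le_of_lt (lt_iff.2 (Or.inl ?_)), fun u hu => ?_⟩
  · exact (ha.2 (mem_image_of_mem _ hp)).trans_lt haa'.lt
  rcases (ha.isLUB.2 (fst_mem_upperBounds_image hu)).lt_or_eq with h | h
  · exact le_iff.2 ((haa'.ge_of_gt h).lt_or_eq.imp_right fun h => ⟨h, bot_le⟩)
  · exact absurd ⟨_, h ▸ snd_mem_upperBounds_fiber hu⟩ hT

end Prod.Lex

namespace Omega1

theorem bddAbove_of_countable {s : Set Omega1} (hs : s.Countable) : BddAbove s := by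
  have hlt : sSup (toOrdinal '' s) < (aleph 1).ord := by
    refine Ordinal.sSup_lt_of_lt_cof ?_ (forall_mem_image.2 fun a _ => a.2)
    rw [ord_aleph, ← Ordinal.lift_cof, cof_omega_one]
    exact (le_aleph0_iff_set_countable.2 (hs.image _)).trans_lt (by simp)
  refine ⟨⟨_, hlt⟩, fun a ha => ?_⟩
  exact le_csSup ⟨_, forall_mem_image.2 fun b _ => b.2.le⟩ (mem_image_of_mem toOrdinal ha)

instance : WellFoundedLT Omega1 :=
  inferInstanceAs (WellFoundedLT {o : Ordinal.{0} // o < (aleph 1).ord})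

instance : NoMaxOrder Omega1 :=
  ⟨fun a => ⟨⟨Order.succ a.1, (isSuccLimit_ord (aleph0_le_aleph 1)).succ_lt a.2⟩,
    Order.lt_succ a.1⟩⟩

end Omega1

namespace ClosedLongRay

instance : NoMaxOrder ClosedLongRay := Prod.Lex.noMaxOrder_of_left

theorem exists_isLUB_of_countable {s : Set ClosedLongRay} (hs : s.Countable) :
    ∃ γ, IsLUB s γ := by
  obtain ⟨a, ha⟩ := (Omega1.bddAbove_of_countable
    (hs.image fun p => (ofLex p).1)).exists_isLUB_of_wellFoundedLT
  have : Fact ((0 : ℝ) < 1) := ⟨one_pos⟩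
  by_cases haS : a ∈ (fun p => (ofLex p).1) '' s
  swap
  · exact ⟨_, Prod.Lex.isLUB_toLex_bot_of_notMem ha haS⟩
  by_cases hT : BddAbove {b | toLex (a, b) ∈ s}
  · obtain ⟨p, hp, rfl⟩ := haS
    have hne : {b | toLex ((ofLex p).1, b) ∈ s}.Nonempty := ⟨(ofLex p).2, hp⟩
    let _ : Inhabited (Ico (0 : ℝ) 1) := ⟨⊥⟩
    exact ⟨_, Prod.Lex.isLUB_toLex_of_isGreatest ⟨⟨p, hp, rfl⟩, ha.1⟩
      (isLUB_csSup hne hT)⟩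
  · obtain ⟨a', haa'⟩ := exists_covBy_of_wellFoundedLT (not_isMax a)
    exact ⟨_, Prod.Lex.isLUB_toLex_bot_of_covBy ⟨haS, ha.1⟩ hT haa'⟩

end ClosedLongRay

namespace LongRay

theorem bddAbove_of_countable {s : Set LongRay} (hs : s.Countable) : BddAbove s := by
  obtain ⟨γ, hγ⟩ := ClosedLongRay.exists_isLUB_of_countable (hs.image toCLR)
  obtain ⟨δ, hδ⟩ := exists_gt γ
  exact ⟨⟨δ, γ, hδ⟩, fun x hx => (hγ.1 (mem_image_of_mem toCLR hx)).trans hδ.le⟩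

instance : Nonempty LongRay :=
  (bddAbove_of_countable countable_empty).nonempty

instance : OrderClosedTopology LongRay :=
  inferInstanceAs (OrderClosedTopology {x : ClosedLongRay // ∃ y, y < x})

instance : CountableInterFilter (atTop : Filter LongRay) :=
  countableInterFilter_atTop_of_bddAbove fun _ => bddAbove_of_countable

theorem exists_tendsto_of_monotone {e : ℕ → LongRay} (he : Monotone e) :
    ∃ γ, Tendsto e atTop (𝓝 γ) := by
  obtain ⟨γ, hγ⟩ :=
    ClosedLongRay.exists_isLUB_of_countable (countable_range fun n => (e n).toCLR)
  obtain ⟨y, hy⟩ := (e 0).2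
  exact ⟨⟨γ, y, hy.trans_le (hγ.1 ⟨0, rfl⟩)⟩,
    tendsto_subtype_rng.2 (tendsto_atTop_isLUB (fun m n h => he h) hγ)⟩

end LongRay

theorem ClubInLongRay.frequently_mem {C : Set LongRay} (hC : ClubInLongRay C) :
    ∃ᶠ α in atTop, α ∈ C :=
  frequently_atTop.2 fun β => (hC.2 β).imp fun _ h => h.symm

theorem ClubInLongRay.inter_nonempty {C D : Set LongRay} (hC : ClubInLongRay C)
    (hD : ClubInLongRay D) : (C ∩ D).Nonempty := by
  obtain ⟨e, he, heCD⟩ := exists_monotone_forall_of_frequently_atTop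
    (P := fun n α => α ∈ if Even n then C else D) fun n => by
      split_ifs
      exacts [hC.frequently_mem, hD.frequently_mem]
  obtain ⟨γ, hγ⟩ := LongRay.exists_tendsto_of_monotone he
  refine ⟨γ, hC.1.mem_of_frequently_of_tendsto ?_ hγ,
    hD.1.mem_of_frequently_of_tendsto ?_ hγ⟩
  · exact frequently_atTop.2 fun m => ⟨2 * m, by omega, by simpa using heCD (2 * m)⟩
  · exact frequently_atTop.2 fun m => ⟨2 * m + 1, by omega, by simpa using heCD (2 * m + 1)⟩

namespace LongRay

variable {X : Type*} [TopologicalSpace X]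

theorem exists_mapClusterPt_atTop [LindelofSpace X] (f : LongRay → X) :
    ∃ x, MapClusterPt x atTop f :=
  let ⟨x, _, hx⟩ := isLindelof_univ (f := map f atTop) (by simp)
  ⟨x, hx⟩

variable [T2Space X] [FirstCountableTopology X] {f : LongRay → X} {x : X}

theorem clubInLongRay_preimage_of_mapClusterPt (hf : Continuous f)
    (hx : MapClusterPt x atTop f) : ClubInLongRay (f ⁻¹' {x}) := by
  refine ⟨isClosed_singleton.preimage hf, fun β => ?_⟩
  obtain ⟨U, hU⟩ := (𝓝 x).exists_antitone_basis
  obtain ⟨e, he, heU⟩ := exists_monotone_forall_of_frequently_atTop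
    (P := fun n α => β ≤ α ∧ f α ∈ U n) fun n =>
      ((hx.frequently (hU.mem n)).and_eventually (eventually_ge_atTop β)).mono fun _ h => h.symm
  obtain ⟨γ, hγ⟩ := exists_tendsto_of_monotone he
  exact ⟨γ, tendsto_nhds_unique ((hf.tendsto γ).comp hγ) (hU.tendsto fun n => (heU n).2),
    ge_of_tendsto' hγ fun n => (heU n).1⟩

theorem tendsto_of_mapClusterPt (hf : Continuous f) (hx : MapClusterPt x atTop f) :
    Tendsto f atTop (𝓝 x) := by
  refine (nhds_basis_opens x).tendsto_right_iff.2 fun U ⟨hxU, hU⟩ => ?_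
  by_contra h
  have hUc : ClubInLongRay (f ⁻¹' Uᶜ) :=
    ⟨hU.isClosed_compl.preimage hf,
      fun β => (frequently_atTop.1 (not_eventually.1 h) β).imp fun _ h => h.symm⟩
  obtain ⟨γ, hγx, hγU⟩ := (clubInLongRay_preimage_of_mapClusterPt hf hx).inter_nonempty hUc
  exact hγU (hγx ▸ hxU)

end LongRay

/-- Every first countable, Lindelöf, Hausdorff space is squat: every
continuous map `𝕃₊ → X` is eventually constant. -/
theorem statement4 (X : Type*) [TopologicalSpace X]
    [FirstCountableTopology X] [LindelofSpace X] [T2Space X] :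
    Squat X := by
  intro f hf
  obtain ⟨x, hx⟩ := LongRay.exists_mapClusterPt_atTop f
  obtain ⟨β, hβ⟩ := eventually_atTop.1
    (LongRay.tendsto_of_mapClusterPt hf hx).eventually_eq_of_countableInterFilter
  exact ⟨β, x, hβ⟩
end
end

section
/- The one-point compactification X of the long ray 𝕃₊ is a compact Hausdorff (hence Lindelöf and Hausdorff) space, and the canonical inclusion 𝕃₊ → X is a continuous map that is not eventually constant. (Thus first countability cannot be omitted from the hypotheses of the result that first countable Lindelöf Hausdorff spaces are squat.) -/
noncomputable section

open Set Topology Filter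

universe u

/-! The one-point compactification of a locally compact Hausdorff space is compact Hausdorff,
so the substance is the local compactness of `𝕃₊`, which follows from the conditional
completeness of `ω₁ ×ₗ [0,1)`. The supremum of a bounded set `S` is `(a, sup T)`, where `a` is
the supremum of the first coordinates and `T` is the fibre of `S` over `a`, unless `T` is empty
(then it is `(a, 0)`) or cofinal in `[0,1)` (then it is `(a + 1, 0)`). Since the inclusion is
injective and `𝕃₊` has no largest element, it is not eventually constant. -/

section LexLUB

variable {α β : Type*} [ConditionallyCompleteLinearOrder α] [SuccOrder α]
  [ConditionallyCompleteLinearOrder β] [OrderBot β]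

theorem Prod.Lex.exists_isLUB {s : Set (α ×ₗ β)} (hne : s.Nonempty) (hbdd : BddAbove s) :
    ∃ x, IsLUB s x := by
  have hmono : Monotone fun p : α ×ₗ β => (ofLex p).1 := Prod.Lex.monotone_fst
  set a := sSup ((fun p : α ×ₗ β => (ofLex p).1) '' s)
  have fst_le : ∀ p ∈ s, (ofLex p).1 ≤ a := fun p hp =>
    le_csSup (hmono.map_bddAbove hbdd) ⟨p, hp, rfl⟩
  have le_fst : ∀ c ∈ upperBounds s, a ≤ (ofLex c).1 := fun c hc =>
    csSup_le (hne.image _) (by rintro _ ⟨p, hp, rfl⟩; exact hmono (hc hp))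
  set T := {b | toLex (a, b) ∈ s}
  have snd_mem : ∀ p ∈ s, (ofLex p).1 = a → (ofLex p).2 ∈ T := fun p hp h => by
    show toLex (a, _) ∈ s
    rw [← h]
    exact hp
  have snd_le : ∀ c ∈ upperBounds s, (ofLex c).1 = a → (ofLex c).2 ∈ upperBounds T :=
    fun c hc h b hb => by
      rcases Prod.Lex.le_iff.1 (hc hb) with h' | h'
      · exact absurd h' (by simp [h])
      · exact h'.2
  by_cases hTne : T.Nonempty
  · by_cases hT : BddAbove T
    · refine ⟨toLex (a, sSup T), fun p hp => ?_, fun c hc => ?_⟩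
      · rcases (fst_le p hp).lt_or_eq with h | h
        · exact Prod.Lex.le_iff.2 (Or.inl h)
        · exact Prod.Lex.le_iff.2 (Or.inr ⟨h, le_csSup hT (snd_mem p hp h)⟩)
      · rcases (le_fst c hc).lt_or_eq with h | h
        · exact Prod.Lex.le_iff.2 (Or.inl h)
        · exact Prod.Lex.le_iff.2 (Or.inr ⟨h, csSup_le hTne (snd_le c hc h.symm)⟩)
    · have lt_fst : ∀ c ∈ upperBounds s, a < (ofLex c).1 := fun c hc =>
        (le_fst c hc).lt_of_ne fun h => hT ⟨_, snd_le c hc h.symm⟩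
      obtain ⟨c, hc⟩ := hbdd
      have ha : ¬IsMax a := not_isMax_iff.2 ⟨_, lt_fst c hc⟩
      refine ⟨toLex (Order.succ a, ⊥), fun p hp => ?_, fun c hc => ?_⟩
      · exact Prod.Lex.le_iff.2 (Or.inl ((fst_le p hp).trans_lt (Order.lt_succ_of_not_isMax ha)))
      · rcases (Order.succ_le_of_lt (lt_fst c hc)).lt_or_eq with h | h
        · exact Prod.Lex.le_iff.2 (Or.inl h)
        · exact Prod.Lex.le_iff.2 (Or.inr ⟨h, bot_le⟩)
  · refine ⟨toLex (a, ⊥), fun p hp => ?_, fun c hc => ?_⟩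
    · exact Prod.Lex.le_iff.2 (Or.inl ((fst_le p hp).lt_of_ne fun h => hTne ⟨_, snd_mem p hp h⟩))
    · rcases (le_fst c hc).lt_or_eq with h | h
      · exact Prod.Lex.le_iff.2 (Or.inl h)
      · exact Prod.Lex.le_iff.2 (Or.inr ⟨h, bot_le⟩)

end LexLUB

open Classical in
noncomputable abbrev ConditionallyCompleteLinearOrder.ofExistsIsLUB (α : Type*) [i : LinearOrder α]
    [OrderBot α] (h : ∀ s : Set α, s.Nonempty → BddAbove s → ∃ x, IsLUB s x) :
    ConditionallyCompleteLinearOrder α :=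
  letI : SupSet α :=
    ⟨fun s => if hs : s.Nonempty ∧ BddAbove s then Classical.choose (h s hs.1 hs.2) else ⊥⟩
  { i, conditionallyCompleteLatticeOfLatticeOfsSup α fun s hb hn => by
      change IsLUB s (dite _ _ _)
      rw [dif_pos ⟨hn, hb⟩]
      exact Classical.choose_spec (h s hn hb) with
    csSup_of_not_bddAbove := fun s hs => by
      change dite _ _ _ = dite _ _ _
      rw [dif_neg fun h => hs h.2, dif_neg fun h => Set.not_nonempty_empty h.1]
    csInf_of_not_bddBelow := fun s hs => (hs (OrderBot.bddBelow s)).elim }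

theorem CompactIccSpace.locallyCompactSpace (α : Type*) [LinearOrder α] [TopologicalSpace α]
    [OrderTopology α] [CompactIccSpace α] : LocallyCompactSpace α where
  local_compact_nhds _ _ hn := by
    obtain ⟨a, b, -, hab, hsub⟩ := exists_Icc_mem_subset_of_mem_nhds hn
    exact ⟨Icc a b, hab, hsub, isCompact_Icc⟩

theorem isOpen_setOf_exists_lt (α : Type*) [LinearOrder α] [TopologicalSpace α]
    [OrderTopology α] : IsOpen {x : α | ∃ y, y < x} := by
  convert isOpen_iUnion fun y : α => isOpen_Ioi (a := y) using 1
  ext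
  simp

instance : OrderBot Omega1 where
  bot := ⟨0, (Cardinal.isSuccLimit_ord (Cardinal.aleph0_le_aleph 1)).pos⟩
  bot_le x := show (0 : Ordinal) ≤ x.1 from bot_le

instance : WellFoundedLT Omega1 :=
  inferInstanceAs (WellFoundedLT {o : Ordinal.{0} // o < (Cardinal.aleph 1).ord})

instance : ConditionallyCompleteLinearOrderBot Omega1 :=
  WellFoundedLT.conditionallyCompleteLinearOrderBot Omega1

instance : SuccOrder Omega1 := SuccOrder.ofLinearWellFoundedLT Omega1

instance : Inhabited (Ico (0 : ℝ) 1) := ⟨⊥⟩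

instance : OrderBot ClosedLongRay := inferInstanceAs (OrderBot (Omega1 ×ₗ Ico (0 : ℝ) 1))

instance : ConditionallyCompleteLinearOrder ClosedLongRay :=
  .ofExistsIsLUB ClosedLongRay fun _ =>
    Prod.Lex.exists_isLUB (α := Omega1) (β := Ico (0 : ℝ) 1)

instance : LocallyCompactSpace LongRay :=
  haveI := CompactIccSpace.locallyCompactSpace ClosedLongRay
  (isOpen_setOf_exists_lt ClosedLongRay).locallyCompactSpace

instance : T2Space LongRay := inferInstanceAs (T2Space {x : ClosedLongRay // ∃ y, y < x})

instance : NoMaxOrder ClosedLongRay := inferInstanceAs (NoMaxOrder (Omega1 ×ₗ Ico (0 : ℝ) 1))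

instance : NoMaxOrder LongRay where
  exists_gt := fun ⟨x, hx⟩ => by
    obtain ⟨y, hy⟩ := exists_gt x
    exact ⟨⟨y, x, hy⟩, hy⟩

/-- The one-point compactification of the long ray is compact and
Hausdorff (hence Lindelöf and Hausdorff), and the canonical inclusion `𝕃₊ → X` is
continuous but not eventually constant. (So first countability cannot be omitted from
the hypotheses of "first countable + Lindelöf + Hausdorff ⟹ squat".) -/
theorem statement6 :
    CompactSpace (OnePoint LongRay) ∧ T2Space (OnePoint LongRay) ∧
      Continuous ((↑) : LongRay → OnePoint LongRay) ∧
      ¬ ∃ (β : LongRay) (x : OnePoint LongRay),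
          ∀ α : LongRay, β ≤ α → (↑α : OnePoint LongRay) = x := by
  refine ⟨inferInstance, inferInstance, OnePoint.continuous_coe, ?_⟩
  rintro ⟨β, x, hconst⟩
  obtain ⟨γ, hγ⟩ := exists_gt β
  exact hγ.ne' (OnePoint.coe_injective ((hconst γ hγ.le).trans (hconst β le_rfl).symm))
end
end

section
/- Every metrisable topological manifold is squat: if M is a metrisable topological space in which every point has an open neighbourhood homeomorphic to ℝⁿ (for some fixed n), then every continuous map f : 𝕃₊ → M is eventually constant. -/
noncomputable section

open Set Topology Filter

universe u

/-!
A continuous map `f : 𝕃₊ → M` into a metric space is eventually constant because every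
sequence in `𝕃₊` has a supremum (countable sets of countable ordinals are bounded in `ω₁`,
since `ℵ₁` is regular) and monotone sequences converge to it. If `f` oscillated by `ε`
beyond every point, iterating the choice of a later point where it has moved by `ε` gives
a monotone sequence whose image is Cauchy, which is absurd. Hence for each `m` some `βₘ`
bounds the oscillation of `f` on `[βₘ, ∞)` by `1/(m+1)`, and `f` is constant beyond an
upper bound of all the `βₘ`.
-/

namespace Prod.Lex

variable {α β : Type*} [LinearOrder α] [LinearOrder β] {S : Set (α ×ₗ β)} {a a' : α} {b : β}

lemma isLUB_toLex_of_fst_notMem (ha : IsLUB ((fun x => (ofLex x).1) '' S) a)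
    (haS : a ∉ (fun x => (ofLex x).1) '' S) (hb : IsBot b) : IsLUB S (toLex (a, b)) := by
  refine ⟨fun x hx => ?_, fun u hu => ?_⟩
  · exact le_iff.2 (Or.inl ((ha.1 ⟨x, hx, rfl⟩).lt_of_ne fun h => haS ⟨x, hx, h⟩))
  · have hau : a ≤ (ofLex u).1 := ha.2 <| by
      rintro _ ⟨x, hx, rfl⟩
      exact monotone_fst _ _ (hu hx)
    exact le_iff'.2 ⟨hau, fun _ => hb _⟩

lemma isLUB_toLex_of_isGreatest_fst (ha : IsGreatest ((fun x => (ofLex x).1) '' S) a)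
    (hb : IsLUB {b | toLex (a, b) ∈ S} b) : IsLUB S (toLex (a, b)) := by
  refine ⟨fun x hx => ?_, fun u hu => ?_⟩
  · rcases (ha.2 ⟨x, hx, rfl⟩).lt_or_eq with hxa | hxa
    · exact le_iff.2 (Or.inl hxa)
    · refine le_iff.2 (Or.inr ⟨hxa, hb.1 ?_⟩)
      simpa [← hxa] using hx
  · obtain ⟨x, hx, rfl⟩ := ha.1
    exact le_iff'.2
      ⟨monotone_fst x u (hu hx), fun hau => hb.2 fun c hc => (le_iff'.1 (hu hc)).2 hau⟩

lemma isLUB_toLex_of_isGreatest_fst_of_covBy (ha : IsGreatest ((fun x => (ofLex x).1) '' S) a)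
    (hS : ¬ BddAbove {b | toLex (a, b) ∈ S}) (haa' : a ⋖ a') (hb : IsBot b) :
    IsLUB S (toLex (a', b)) := by
  refine ⟨fun x hx => le_iff.2 (Or.inl ((ha.2 ⟨x, hx, rfl⟩).trans_lt haa'.lt)), fun u hu => ?_⟩
  have hau : a < (ofLex u).1 := by
    obtain ⟨x, hx, rfl⟩ := ha.1
    exact (monotone_fst x u (hu hx)).lt_of_ne fun hau =>
      hS ⟨(ofLex u).2, fun c hc => (le_iff'.1 (hu hc)).2 hau⟩
  exact le_iff'.2 ⟨haa'.ge_of_gt hau, fun _ => hb _⟩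

end Prod.Lex

namespace Omega1

lemma exists_isLUB_range (u : ℕ → Omega1) : ∃ a, IsLUB (range u) a := by
  have hsup : ⨆ k, (u k).1 < (Cardinal.aleph 1).ord :=
    Ordinal.iSup_lt_of_lt_cof (by simp) fun k => (u k).2
  refine ⟨⟨_, hsup⟩, ?_, fun c hc => ?_⟩
  · rintro _ ⟨k, rfl⟩
    exact Ordinal.le_iSup (fun k => (u k).1) k
  · exact Ordinal.iSup_le fun k => hc ⟨k, rfl⟩

lemma exists_covBy (a : Omega1) : ∃ a', a ⋖ a' :=
  ⟨⟨Order.succ a.1, (Cardinal.isSuccLimit_ord (Cardinal.aleph0_le_aleph 1)).succ_lt a.2⟩,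
    Subtype.coe_lt_coe.1 (Order.lt_succ a.1),
    fun _ hac hca => (Order.lt_succ_iff.1 (Subtype.coe_lt_coe.2 hca)).not_gt hac⟩

end Omega1

lemma Set.Ico.exists_isLUB {α : Type*} [ConditionallyCompleteLinearOrder α] {a b : α}
    (hab : a < b) {T : Set (Ico a b)} (hT : BddAbove T) : ∃ c, IsLUB T c := by
  let _ : Inhabited (Ico a b) := ⟨⟨a, le_rfl, hab⟩⟩
  rcases T.eq_empty_or_nonempty with rfl | hne
  · exact ⟨default, isLUB_empty_iff.2 fun t => t.2.1⟩
  · exact ⟨sSup T, isLUB_csSup hne hT⟩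

lemma ClosedLongRay.exists_isLUB_range (g : ℕ → ClosedLongRay) :
    ∃ γ, IsLUB (range g) γ := by
  have hbot : IsBot (⟨0, le_rfl, one_pos⟩ : Ico (0 : ℝ) 1) := fun t => t.2.1
  obtain ⟨a, ha⟩ := Omega1.exists_isLUB_range ((fun x => (ofLex x).1) ∘ g)
  rw [range_comp] at ha
  by_cases haS : a ∈ (fun x => (ofLex x).1) '' range g
  · by_cases hT : BddAbove {b | toLex (a, b) ∈ range g}
    · obtain ⟨b, hb⟩ := Set.Ico.exists_isLUB one_pos hT
      exact ⟨_, Prod.Lex.isLUB_toLex_of_isGreatest_fst ⟨haS, ha.1⟩ hb⟩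
    · obtain ⟨a', haa'⟩ := Omega1.exists_covBy a
      exact ⟨_, Prod.Lex.isLUB_toLex_of_isGreatest_fst_of_covBy ⟨haS, ha.1⟩ hT haa' hbot⟩
  · exact ⟨_, Prod.Lex.isLUB_toLex_of_fst_notMem ha haS hbot⟩

instance : OrderTopology LongRay :=
  @orderTopology_of_ordConnected ClosedLongRay _ _ _ {x | ∃ y, y < x}
    (IsUpperSet.ordConnected fun _ _ hxy ⟨y, hy⟩ => ⟨y, hy.trans_le hxy⟩)

instance : Nonempty LongRay := by
  have h0 : (0 : Ordinal) < (Cardinal.aleph 1).ord := by simp [Ordinal.omega_pos]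
  exact ⟨⟨toLex (⟨0, h0⟩, ⟨1 / 2, by norm_num, by norm_num⟩),
    toLex (⟨0, h0⟩, ⟨0, le_rfl, one_pos⟩),
    Prod.Lex.toLex_strictMono (Prod.mk_lt_mk_iff_right.2 (Subtype.mk_lt_mk.2 (by norm_num)))⟩⟩

lemma LongRay.exists_isLUB_range (g : ℕ → LongRay) : ∃ γ, IsLUB (range g) γ := by
  obtain ⟨γ, hγ⟩ := ClosedLongRay.exists_isLUB_range fun k => (g k).1
  obtain ⟨y, hy⟩ := (g 0).2
  refine ⟨⟨γ, y, hy.trans_le (hγ.1 ⟨0, rfl⟩)⟩, ?_, fun c hc => ?_⟩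
  · rintro _ ⟨k, rfl⟩
    exact hγ.1 ⟨k, rfl⟩
  · exact hγ.2 (by rintro _ ⟨k, rfl⟩; exact hc ⟨k, rfl⟩)

section EventuallyConst

variable {Λ : Type*} [Preorder Λ] [TopologicalSpace Λ] [SupConvergenceClass Λ] [Nonempty Λ]

lemma exists_forall_ge_dist_lt_of_continuous {X : Type*} [PseudoMetricSpace X]
    (hΛ : ∀ g : ℕ → Λ, ∃ γ, IsLUB (range g) γ) {f : Λ → X} (hf : Continuous f) {ε : ℝ}
    (hε : 0 < ε) : ∃ β, ∀ α, β ≤ α → dist (f α) (f β) < ε := by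
  by_contra! hcon
  choose next hle hdist using hcon
  obtain ⟨x₀⟩ := ‹Nonempty Λ›
  set g : ℕ → Λ := fun k => next^[k] x₀
  have hg : Monotone g := monotone_nat_of_le_succ fun k => by
    simpa only [g, Function.iterate_succ_apply'] using hle (g k)
  obtain ⟨γ, hγ⟩ := hΛ g
  have hfg : CauchySeq (f ∘ g) := ((hf.tendsto γ).comp (tendsto_atTop_isLUB hg hγ)).cauchySeq
  obtain ⟨N, hN⟩ := Metric.cauchySeq_iff.1 hfg ε hε
  refine (hdist (g N)).not_gt ?_
  simpa only [g, Function.comp, Function.iterate_succ_apply'] using hN (N + 1) (by omega) N le_rfl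

lemma exists_forall_ge_eq_of_continuous {X : Type*} [MetricSpace X]
    (hΛ : ∀ g : ℕ → Λ, ∃ γ, IsLUB (range g) γ) {f : Λ → X} (hf : Continuous f) :
    ∃ β x, ∀ α, β ≤ α → f α = x := by
  choose β hβ using fun m : ℕ =>
    exists_forall_ge_dist_lt_of_continuous hΛ hf (Nat.one_div_pos_of_nat (n := m))
  obtain ⟨γ, hγ⟩ := hΛ β
  refine ⟨γ, f γ, fun α hα => eq_of_forall_dist_le fun ε hε => ?_⟩
  obtain ⟨m, hm⟩ := exists_nat_one_div_lt (half_pos hε)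
  have hβγ : β m ≤ γ := hγ.1 ⟨m, rfl⟩
  calc dist (f α) (f γ) ≤ dist (f α) (f (β m)) + dist (f γ) (f (β m)) := dist_triangle_right _ _ _
    _ ≤ ε / 2 + ε / 2 := by
        gcongr
        · exact ((hβ m α (hβγ.trans hα)).trans hm).le
        · exact ((hβ m γ hβγ).trans hm).le
    _ = ε := add_halves ε

end EventuallyConst

theorem statement7_general (M : Type) [TopologicalSpace M]
    [TopologicalSpace.MetrizableSpace M] :
    Squat M := by
  let _ := TopologicalSpace.metrizableSpaceMetric M
  exact fun f hf => exists_forall_ge_eq_of_continuous LongRay.exists_isLUB_range hf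

/-- Every metrisable topological manifold is squat: every continuous map
`𝕃₊ → M` is eventually constant. -/
theorem statement7 (n : ℕ) (M : Type) [TopologicalSpace M]
    [TopologicalSpace.MetrizableSpace M] (hM : IsTopManifold M n) :
    Squat M :=
  statement7_general M
end
end
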